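/- Let X be a smooth projective curve over an algebraically closed field k of characteristic zero, and let E and F be vector bundles on X with H^0(X, E ⊗ F) = 0 and H^1(X, E ⊗ F) = 0. Then E is semistable, i.e., for every nonzero subsheaf E' ⊆ E one has deg(E')/rk(E') ≤ deg(E)/rk(E'). -/

import Mathlib

/-- Abstract data of coherent sheaves / vector bundles on an irreducible smooth projective
curve over an algebraically closed field of characteristic zero: each element of `B` stands
for (the isomorphism class of) a nonzero coherent sheaf, with its degree, rank, dimensions
of cohomology `h0 = dim H^0`, `h1 = dim H^1`, tensor product, and the subsheaf relation.
The axioms record Riemann–Roch and the standard behaviour of degree, rank and `H^0`. -/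
structure CurveSheafData where
  B : Type
  deg : B → ℤ
  rk : B → ℕ
  h0 : B → ℕ
  h1 : B → ℕ
  tens : B → B → B
  Sub : B → B → Prop
  genus : ℕ
  riemannRoch : ∀ E, (h0 E : ℤ) - (h1 E : ℤ) = deg E + (rk E : ℤ) * (1 - (genus : ℤ))
  rk_tens : ∀ E F, rk (tens E F) = rk E * rk F
  deg_tens : ∀ E F, deg (tens E F) = (rk F : ℤ) * deg E + (rk E : ℤ) * deg F
  sub_tens : ∀ E' E F, Sub E' E → Sub (tens E' F) (tens E F)
  h0_mono : ∀ W' W, Sub W' W → h0 W = 0 → h0 W' = 0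

/-- The slope `μ = deg / rk` of a sheaf. -/
def CurveSheafData.slope (C : CurveSheafData) (E : C.B) : ℚ :=
  (C.deg E : ℚ) / (C.rk E : ℚ)

/-!
For any bundle `V` of positive rank, Riemann–Roch gives
`χ(V ⊗ F) = rk V · rk F · (μ V + μ F + 1 - g)`, so the sign of `χ(V ⊗ F)` is the sign of
`μ V + μ F + 1 - g`. The vanishing of both cohomology groups makes `χ(E ⊗ F) = 0`, while for
`E' ⊆ E` the group `H⁰(E' ⊗ F) ⊆ H⁰(E ⊗ F)` vanishes, so `χ(E' ⊗ F) = -h¹(E' ⊗ F) ≤ 0`.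
Comparing the two signs gives `μ E' ≤ μ E`.
-/

namespace CurveSheafData

variable (C : CurveSheafData)

def eulerChar (V : C.B) : ℤ :=
  C.h0 V - C.h1 V

theorem eulerChar_nonpos_of_h0_eq_zero {V : C.B} (h : C.h0 V = 0) : C.eulerChar V ≤ 0 := by
  simp [eulerChar, h]

theorem eulerChar_tens {V W : C.B} (hV : 0 < C.rk V) (hW : 0 < C.rk W) :
    (C.eulerChar (C.tens V W) : ℚ) =
      C.rk V * C.rk W * (C.slope V + C.slope W + 1 - C.genus) := by
  have hRR : C.eulerChar (C.tens V W) =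
      C.rk W * C.deg V + C.rk V * C.deg W + C.rk V * C.rk W * (1 - C.genus) := by
    rw [eulerChar, C.riemannRoch, C.deg_tens, C.rk_tens]
    push_cast
    ring
  rw [hRR, slope, slope]
  push_cast
  field_simp
  ring

theorem eulerChar_tens_nonpos_iff {V W : C.B} (hV : 0 < C.rk V) (hW : 0 < C.rk W) :
    C.eulerChar (C.tens V W) ≤ 0 ↔ C.slope V + C.slope W + 1 - C.genus ≤ 0 := by
  have hrk : (0 : ℚ) < C.rk V * C.rk W := by positivity
  rw [← Int.cast_nonpos (R := ℚ), C.eulerChar_tens hV hW]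
  nth_rw 1 [← mul_zero ((C.rk V : ℚ) * C.rk W)]
  exact mul_le_mul_iff_right₀ hrk

theorem eulerChar_tens_eq_zero_iff {V W : C.B} (hV : 0 < C.rk V) (hW : 0 < C.rk W) :
    C.eulerChar (C.tens V W) = 0 ↔ C.slope V + C.slope W + 1 - C.genus = 0 := by
  have hrk : (C.rk V : ℚ) * C.rk W ≠ 0 := by positivity
  rw [← Int.cast_eq_zero (α := ℚ), C.eulerChar_tens hV hW, mul_eq_zero, or_iff_right hrk]

end CurveSheafData

/-- **Faltings' criterion, easy direction.** If `E` and `F` are vector bundles on a smooth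
projective curve `X` with `H^0(X, E ⊗ F) = 0 = H^1(X, E ⊗ F)`, then `E` is semistable:
every nonzero subsheaf `E' ⊆ E` satisfies `deg E' / rk E' ≤ deg E / rk E`. -/
theorem semistable_of_cohomology_vanishing (C : CurveSheafData) (E F : C.B)
    (hrkE : 0 < C.rk E) (hrkF : 0 < C.rk F)
    (hH0 : C.h0 (C.tens E F) = 0) (hH1 : C.h1 (C.tens E F) = 0) :
    ∀ E', C.Sub E' E → 0 < C.rk E' → C.slope E' ≤ C.slope E := by
  intro E' hsub hrkE'
  have hχE : C.eulerChar (C.tens E F) = 0 := by simp [CurveSheafData.eulerChar, hH0, hH1]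
  have hχE' : C.eulerChar (C.tens E' F) ≤ 0 :=
    C.eulerChar_nonpos_of_h0_eq_zero (C.h0_mono _ _ (C.sub_tens E' E F hsub) hH0)
  have hμE := (C.eulerChar_tens_eq_zero_iff hrkE hrkF).1 hχE
  have hμE' := (C.eulerChar_tens_nonpos_iff hrkE' hrkF).1 hχE'
  linarith
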